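/- arXiv:1806.00464 — 9 statements merged into one kernel-verified Lean document; each statement's English description precedes it below -/
import Mathlib

section
/- Let k be a field of characteristic p > 0 and let B be a finite-dimensional commutative k-algebra equipped with a k-algebra homomorphism π : B → k. Then the following are equivalent: (i) x^p = 0 for every x ∈ ker π; (ii) B is a local ring and the nilradical of B equals the kernel of the Frobenius endomorphism of B, i.e. nil(B) = {b ∈ B : b^p = 0}. -/
/-!
An algebra map `π : B → k` onto the base field is split by `algebraMap`, so its kernel `m` is a
maximal ideal, and it contains the nilradical because it is prime. If every element of `m` has
vanishing `p`-th power, then `m` is nil, hence contained in every prime: it is the only maximal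
ideal, and the nilradical, squeezed between `m` and the `p`-torsion of Frobenius, equals both.
Conversely, `B` is Artinian, so in the local case its maximal ideal `m` is the nilradical, which
is killed by Frobenius by assumption.
-/

theorem AlgHom.surjective_of_codomain_eq_base {R A : Type*} [CommSemiring R] [Semiring A]
    [Algebra R A] (φ : A →ₐ[R] R) : Function.Surjective φ :=
  fun r ↦ ⟨algebraMap R A r, φ.commutes r⟩

theorem IsLocalRing.of_isMaximal_le_nilradical {R : Type*} [CommSemiring R] (m : Ideal R)
    [hm : m.IsMaximal] (h : m ≤ nilradical R) : IsLocalRing R :=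
  IsLocalRing.of_unique_max_ideal ⟨m, hm, fun I hI ↦
    (hm.eq_of_le hI.ne_top (h.trans (nilradical_le_prime I))).symm⟩

theorem ker_pi_pow_p_eq_zero_iff_isLocalRing_and_nilradical_eq_ker_frobenius_general
    (p : ℕ) (k B : Type*) [Field k]
    [CommRing B] [Algebra k B] [FiniteDimensional k B] (π : B →ₐ[k] k) :
    (∀ x ∈ RingHom.ker π, x ^ p = 0) ↔
      (IsLocalRing B ∧ ∀ b : B, b ∈ nilradical B ↔ b ^ p = 0) := by
  have hπ : Function.Surjective π := π.surjective_of_codomain_eq_base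
  have : (RingHom.ker π).IsMaximal := RingHom.ker_isMaximal_of_surjective π hπ
  constructor
  · intro h
    have hker_nil : RingHom.ker π ≤ nilradical B := fun x hx ↦ ⟨p, h x hx⟩
    have : IsLocalRing B := .of_isMaximal_le_nilradical _ hker_nil
    exact ⟨this, fun b ↦ ⟨fun hb ↦ h b (nilradical_le_prime _ hb), fun hb ↦ ⟨p, hb⟩⟩⟩
  · rintro ⟨_, hnil⟩ x hx
    have : IsArtinianRing B := isArtinian_of_tower k inferInstance
    have hker : RingHom.ker π = nilradical B := by
      rw [Ring.KrullDimLE.nilradical_eq_maximalIdeal]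
      exact IsLocalRing.ker_eq_maximalIdeal (π : B →+* k) hπ
    exact (hnil x).mp (hker ▸ hx)

/-- Let `k` be a field of characteristic `p > 0` and `B` a finite-dimensional commutative
`k`-algebra with a `k`-algebra homomorphism `π : B → k`. The following are equivalent:
(i) `x ^ p = 0` for every `x ∈ ker π`;
(ii) `B` is local and the nilradical of `B` equals the kernel of Frobenius,
i.e. `nil(B) = {b : B | b ^ p = 0}`. -/
theorem ker_pi_pow_p_eq_zero_iff_isLocalRing_and_nilradical_eq_ker_frobenius
    (p : ℕ) [Fact p.Prime] (k B : Type*) [Field k] [CharP k p]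
    [CommRing B] [Algebra k B] [FiniteDimensional k B] (π : B →ₐ[k] k) :
    (∀ x ∈ RingHom.ker π, x ^ p = 0) ↔
      (IsLocalRing B ∧ ∀ b : B, b ∈ nilradical B ↔ b ^ p = 0) :=
  ker_pi_pow_p_eq_zero_iff_isLocalRing_and_nilradical_eq_ker_frobenius_general p k B π
end

section
/- Let k be a field and B a finite-dimensional commutative local k-algebra equipped with a k-algebra homomorphism π : B → k. Let R and S be integral domains that are k-algebras, and let ∂ : R → S ⊗_k B be a B-operator from R to S whose underlying homomorphism ∂₀ : R → S is injective. Then ∂ extends uniquely to a B-operator on the fields of fractions: there is a unique k-algebra homomorphism ∂' : Frac(R) → Frac(S) ⊗_k B such that ∂' ∘ (R → Frac(R)) = ((S → Frac(S)) ⊗ id_B) ∘ ∂. -/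
open TensorProduct

/-!
The maximal ideal of the Artinian local ring `B` is nil, and it is the kernel of `π`; hence
the kernel of the counit `T ⊗[k] B → T` is nil too, and an element of `T ⊗[k] B` is a unit
as soon as its counit is. For `T = Frac(S)` this means that the composite `R → Frac(S) ⊗[k] B`
sends every `r ≠ 0` to a unit, because its counit is the image of `δ₀ r ≠ 0` in `Frac(S)`.
The universal property of `Frac(R)` then gives the unique extension.
-/

/-- The underlying homomorphism extractor `δ₀ = (id_T ⊗ π) ∘ δ` of a `B`-operator:
the algebra map `T ⊗[k] B → T` induced by `π : B → k` and `T ⊗[k] k ≅ T`. -/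
noncomputable def BOp.counit (k T B : Type*) [CommSemiring k] [CommSemiring T] [Algebra k T]
    [CommSemiring B] [Algebra k B] (π : B →ₐ[k] k) : T ⊗[k] B →ₐ[k] T :=
  (Algebra.TensorProduct.rid k k T).toAlgHom.comp
    (Algebra.TensorProduct.map (AlgHom.id k T) π)

theorem AlgHom.ker_le_nilradical_of_isLocalRing {k B : Type*} [Field k] [CommRing B]
    [Algebra k B] [FiniteDimensional k B] [IsLocalRing B] (π : B →ₐ[k] k) :
    RingHom.ker π ≤ nilradical B := by
  have := IsArtinianRing.of_finite k B
  rw [Ring.KrullDimLE.nilradical_eq_maximalIdeal,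
    ← IsLocalRing.ker_eq_maximalIdeal (π : B →+* k)
      (fun c => ⟨algebraMap k B c, π.commutes c⟩)]
  rfl

namespace BOp

variable {k B : Type*} [CommRing k] [CommRing B] [Algebra k B] {π : B →ₐ[k] k}
variable {T : Type*} [CommRing T] [Algebra k T]

theorem ker_counit_le_nilradical (hπ : RingHom.ker π ≤ nilradical B) :
    RingHom.ker (counit k T B π) ≤ nilradical (T ⊗[k] B) := by
  have hker : RingHom.ker (counit k T B π) =
      (RingHom.ker π).map (Algebra.TensorProduct.includeRight : B →ₐ[k] T ⊗[k] B) := by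
    rw [← Algebra.TensorProduct.lTensor_ker π (fun c => ⟨algebraMap k B c, π.commutes c⟩)]
    exact RingHom.ker_comp_of_injective _ (Algebra.TensorProduct.rid k k T).injective
  rw [hker, Ideal.map_le_iff_le_comap]
  exact fun b hb => (mem_nilradical.mp (hπ hb)).map _

theorem counit_includeLeft (t : T) :
    counit k T B π (Algebra.TensorProduct.includeLeft (S := k) t : T ⊗[k] B) = t := by
  simp [counit]

theorem isUnit_of_isUnit_counit (hπ : RingHom.ker π ≤ nilradical B) {x : T ⊗[k] B}
    (hx : IsUnit (counit k T B π x)) : IsUnit x := by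
  set x₀ : T ⊗[k] B := Algebra.TensorProduct.includeLeft (S := k) (counit k T B π x)
  have hnil : IsNilpotent (x - x₀) :=
    ker_counit_le_nilradical hπ (by rw [RingHom.mem_ker, map_sub, counit_includeLeft, sub_self])
  have hx₀ : IsUnit x₀ := hx.map _
  simpa only [add_sub_cancel] using hnil.isUnit_add_left_of_commute hx₀ (Commute.all _ _)

theorem counit_comp_map {T' : Type*} [CommRing T'] [Algebra k T'] (f : T →ₐ[k] T') :
    (counit k T' B π).comp (Algebra.TensorProduct.map f (AlgHom.id k B)) =
      f.comp (counit k T B π) := by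
  ext <;> simp [counit]

end BOp

theorem IsLocalization.existsUnique_algHom_comp_eq {A R S P : Type*} [CommSemiring A]
    [CommSemiring R] [Algebra A R] (M : Submonoid R)
    [CommSemiring S] [Algebra A S] [Algebra R S] [IsScalarTower A R S] [IsLocalization M S]
    [CommSemiring P] [Algebra A P] {f : R →ₐ[A] P} (hf : ∀ y : M, IsUnit (f y)) :
    ∃! g : S →ₐ[A] P, g.comp (IsScalarTower.toAlgHom A R S) = f := by
  refine ⟨liftAlgHom hf, AlgHom.ext (lift_eq hf), fun g hg => algHom_ext M ?_⟩
  exact hg.trans (AlgHom.ext (lift_eq hf)).symm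

theorem BOperator.extends_uniquely_to_fractionField_general
    (k B : Type*) [Field k] [CommRing B] [Algebra k B]
    [FiniteDimensional k B] [IsLocalRing B] (π : B →ₐ[k] k)
    (R S FR FS : Type*) [CommRing R] [IsDomain R] [Algebra k R]
    [CommRing S] [Algebra k S]
    [Field FR] [Algebra R FR] [IsFractionRing R FR] [Algebra k FR] [IsScalarTower k R FR]
    [Field FS] [Algebra S FS] [IsFractionRing S FS] [Algebra k FS] [IsScalarTower k S FS]
    (δ : R →ₐ[k] S ⊗[k] B)
    (hinj : Function.Injective ((BOp.counit k S B π).comp δ)) :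
    ∃! δ' : FR →ₐ[k] FS ⊗[k] B,
      δ'.comp (IsScalarTower.toAlgHom k R FR) =
        (Algebra.TensorProduct.map (IsScalarTower.toAlgHom k S FS) (AlgHom.id k B)).comp δ := by
  refine IsLocalization.existsUnique_algHom_comp_eq (nonZeroDivisors R) fun y => ?_
  refine BOp.isUnit_of_isUnit_counit π.ker_le_nilradical_of_isLocalRing (isUnit_iff_ne_zero.mpr ?_)
  rw [← AlgHom.comp_apply, ← AlgHom.comp_assoc, BOp.counit_comp_map, AlgHom.comp_assoc,
    AlgHom.comp_apply]
  have hδ₀ : ((BOp.counit k S B π).comp δ) y ≠ 0 :=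
    (map_ne_zero_iff _ hinj).mpr (nonZeroDivisors.coe_ne_zero y)
  exact (map_ne_zero_iff (IsScalarTower.toAlgHom k S FS) (IsFractionRing.injective S FS)).mpr hδ₀

/-- Let `B` be a finite-dimensional commutative local `k`-algebra with a `k`-algebra map
`π : B → k`, let `R`, `S` be `k`-algebra domains, and let `δ : R → S ⊗[k] B` be a `B`-operator
from `R` to `S` whose underlying homomorphism `δ₀ : R → S` is injective. Then `δ` extends
uniquely to a `B`-operator on the fields of fractions `FR = Frac(R)`, `FS = Frac(S)`:
there is a unique `k`-algebra homomorphism `δ' : FR → FS ⊗[k] B` with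
`δ' ∘ (R → FR) = ((S → FS) ⊗ id_B) ∘ δ`. -/
theorem BOperator.extends_uniquely_to_fractionField
    (k B : Type*) [Field k] [CommRing B] [Algebra k B]
    [FiniteDimensional k B] [IsLocalRing B] (π : B →ₐ[k] k)
    (R S FR FS : Type*) [CommRing R] [IsDomain R] [Algebra k R]
    [CommRing S] [IsDomain S] [Algebra k S]
    [Field FR] [Algebra R FR] [IsFractionRing R FR] [Algebra k FR] [IsScalarTower k R FR]
    [Field FS] [Algebra S FS] [IsFractionRing S FS] [Algebra k FS] [IsScalarTower k S FS]
    (δ : R →ₐ[k] S ⊗[k] B)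
    (hinj : Function.Injective ((BOp.counit k S B π).comp δ)) :
    ∃! δ' : FR →ₐ[k] FS ⊗[k] B,
      δ'.comp (IsScalarTower.toAlgHom k R FR) =
        (Algebra.TensorProduct.map (IsScalarTower.toAlgHom k S FS) (AlgHom.id k B)).comp δ :=
  BOperator.extends_uniquely_to_fractionField_general k B π R S FR FS δ hinj
end

section
/- Let k be a field of characteristic p > 0 and B a commutative k-algebra with a k-algebra homomorphism π : B → k such that x^p = 0 for every x ∈ ker π. Let R and T be k-algebras and ∂ : R → T ⊗_k B a B-operator. Then for every r ∈ R one has ∂(r^p) = ∂₀(r^p) ⊗ 1_B = (∂₀(r))^p ⊗ 1_B; that is, every p-th power of R lies in the constants of ∂. -/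
open TensorProduct

/-!
Write `ε` for the counit `T ⊗[k] B → T`. For a pure tensor, `t ⊗ b - ε (t ⊗ b) ⊗ 1 = t ⊗ (b - π b)`
has a factor in `ker π`, so its `p`-th power vanishes; since `x ↦ x ^ p` is additive in
characteristic `p`, the same holds for `z - ε z ⊗ 1` for every `z`, i.e. `z ^ p = (ε z) ^ p ⊗ 1`.
Applied to `z = δ r` this is the theorem, because `δ` and `ε` commute with `p`-th powers.
-/

namespace BOp

section

variable {k T B : Type*} [CommRing k] [CommRing T] [Algebra k T] [CommRing B] [Algebra k B]
  (π : B →ₐ[k] k)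

@[simp]
lemma counit_tmul (t : T) (b : B) : counit k T B π (t ⊗ₜ[k] b) = π b • t := by
  simp [counit]

lemma tmul_sub_counit_tmul_one (t : T) (b : B) :
    t ⊗ₜ[k] b - counit k T B π (t ⊗ₜ[k] b) ⊗ₜ[k] (1 : B) =
      t ⊗ₜ[k] (b - algebraMap k B (π b)) := by
  rw [counit_tmul, tmul_sub, smul_tmul, Algebra.smul_def, mul_one]

lemma sub_counit_tmul_one_pow_eq_zero (p : ℕ) [ExpChar (T ⊗[k] B) p]
    (hπ : ∀ x ∈ RingHom.ker π, x ^ p = 0) (z : T ⊗[k] B) :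
    (z - counit k T B π z ⊗ₜ[k] (1 : B)) ^ p = 0 := by
  change z - _ ∈ RingHom.ker (frobenius (T ⊗[k] B) p)
  induction z using TensorProduct.induction_on with
  | zero => simp
  | tmul t b =>
    have hb : b - algebraMap k B (π b) ∈ RingHom.ker π := by simp [RingHom.mem_ker]
    rw [tmul_sub_counit_tmul_one, RingHom.mem_ker, frobenius_def,
      Algebra.TensorProduct.tmul_pow, hπ _ hb, tmul_zero]
  | add x y hx hy =>
    rw [map_add, add_tmul, add_sub_add_comm]
    exact add_mem hx hy

end

lemma pow_eq_counit_pow_tmul_one (p : ℕ) [Fact p.Prime] {k : Type*} [Field k] [CharP k p]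
    {T B : Type*} [CommRing T] [Algebra k T] [CommRing B] [Algebra k B] (π : B →ₐ[k] k)
    (hπ : ∀ x ∈ RingHom.ker π, x ^ p = 0) (z : T ⊗[k] B) :
    z ^ p = (counit k T B π z ^ p) ⊗ₜ[k] (1 : B) := by
  rcases subsingleton_or_nontrivial (T ⊗[k] B) with _ | _
  · exact Subsingleton.elim _ _
  have : CharP (T ⊗[k] B) p := charP_of_injective_algebraMap (algebraMap k _).injective p
  calc z ^ p = (counit k T B π z ⊗ₜ[k] (1 : B)) ^ p := by
        rw [← sub_eq_zero, ← sub_pow_char, sub_counit_tmul_one_pow_eq_zero π p hπ]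
    _ = (counit k T B π z ^ p) ⊗ₜ[k] (1 : B) := by
        rw [Algebra.TensorProduct.tmul_pow, one_pow]

end BOp

/-- Let `k` be a field of characteristic `p > 0` and `B` a commutative `k`-algebra with a
`k`-algebra map `π : B → k` such that `x ^ p = 0` for every `x ∈ ker π`. Let `R`, `T` be
`k`-algebras and `δ : R → T ⊗[k] B` a `B`-operator. Then for every `r ∈ R` one has
`δ(r ^ p) = δ₀(r ^ p) ⊗ 1 = (δ₀ r) ^ p ⊗ 1`; that is, every `p`-th power of `R` lies in the
constants of `δ`. -/
theorem BOperator.pow_p_mem_constants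
    (p : ℕ) [Fact p.Prime] (k : Type*) [Field k] [CharP k p]
    (B : Type*) [CommRing B] [Algebra k B] (π : B →ₐ[k] k)
    (hπ : ∀ x ∈ RingHom.ker π, x ^ p = 0)
    (R T : Type*) [CommRing R] [Algebra k R] [CommRing T] [Algebra k T]
    (δ : R →ₐ[k] T ⊗[k] B) (r : R) :
    δ (r ^ p) = (((BOp.counit k T B π).comp δ) (r ^ p)) ⊗ₜ[k] (1 : B) ∧
      ((BOp.counit k T B π).comp δ) (r ^ p) = (((BOp.counit k T B π).comp δ) r) ^ p := by
  have hδ₀ : ((BOp.counit k T B π).comp δ) (r ^ p) = (((BOp.counit k T B π).comp δ) r) ^ p :=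
    map_pow _ r p
  refine ⟨?_, hδ₀⟩
  rw [hδ₀, map_pow, AlgHom.comp_apply, BOp.pow_eq_counit_pow_tmul_one p π hπ (δ r)]
end

section
/- Let k be a field of characteristic p > 0 and B a commutative k-algebra with a k-algebra homomorphism π : B → k such that x^p = 0 for every x ∈ ker π. Let k ⊆ K ⊆ M be a tower of fields, T a k-algebra, and ∂^K : K → T ⊗_k B a B-operator such that m^p lies in the constants of ∂^K for every m ∈ M (i.e. ∂^K(m^p) = ∂₀^K(m^p) ⊗ 1_B). Let b : M → T be a k-algebra homomorphism with b|_K = ∂₀^K. Then there exists a B-operator ∂^M : M → T ⊗_k B such that (id_T ⊗ π) ∘ ∂^M = b and ∂^M|_K = ∂^K. -/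
/-!
Since `M ^ p ⊆ K`, an element `m` outside an intermediate field `L` has minimal polynomial
`X ^ p - m ^ p` over `L`, so a `K`-algebra map from `L` to a ring `A` extends to `L[m]` by
sending `m` to any `p`-th root of the image of `m ^ p`. Zorn's lemma, applied to graphs of such
partial maps inside `M × A`, then yields a map on all of `M`. For the `B`-operator the required
root of `∂(m ^ p) = b(m) ^ p ⊗ 1` is `b(m) ⊗ 1`. The condition `∂₀ = b` is obtained by mapping
into the fibre product of `T ⊗ B` and `M` over `T`: its `M`-component is an endomorphism of the
purely inseparable extension `M / K`, hence the identity.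
-/

open TensorProduct

open Polynomial

section AdjoinPthRoot

variable {L M A : Type*} [Field L] [Field M] [CommRing A] [Algebra L M] [Algebra L A]
  {p : ℕ} [Fact p.Prime] [CharP M p] {m : M} {c : L}

theorem minpoly_eq_X_pow_sub_C_of_notMem_range (hm : m ∉ (algebraMap L M).range)
    (hc : algebraMap L M c = m ^ p) : minpoly L m = X ^ p - C c := by
  have hp : p ≠ 0 := (Fact.out : p.Prime).ne_zero
  have hirr : Irreducible (X ^ p - C c) := by
    refine X_pow_sub_C_irreducible_of_prime Fact.out fun l hl => hm ⟨l, ?_⟩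
    have : (algebraMap L M l - m) ^ p = 0 := by rw [sub_pow_char, ← map_pow, hl, hc, sub_self]
    exact sub_eq_zero.1 (pow_eq_zero_iff hp |>.1 this)
  refine (minpoly.eq_of_irreducible_of_monic hirr ?_ (monic_X_pow_sub_C c hp)).symm
  simp [hc]

theorem nonempty_algHom_adjoin_of_pow_eq (hm : m ∉ (algebraMap L M).range)
    (hc : algebraMap L M c = m ^ p) {α : A} (hα : algebraMap L A c = α ^ p) :
    Nonempty (Algebra.adjoin L {m} →ₐ[L] A) := by
  have hint : IsIntegral L m := .of_pow (Fact.out : p.Prime).pos (hc ▸ isIntegral_algebraMap)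
  refine ⟨(Algebra.adjoin.powerBasis hint).lift α ?_⟩
  rw [Algebra.adjoin.powerBasis_gen, ← minpoly.algHom_eq (Algebra.adjoin L {m}).val
    Subtype.val_injective, Subalgebra.coe_val, minpoly_eq_X_pow_sub_C_of_notMem_range hm hc]
  simp [hα]

end AdjoinPthRoot

theorem Subalgebra.exists_mem_of_mem_sSup_of_directedOn {R B : Type*} [CommSemiring R]
    [Semiring B] [Algebra R B] {S : Set (Subalgebra R B)} (hne : S.Nonempty)
    (hS : DirectedOn (· ≤ ·) S) {x : B} (hx : x ∈ sSup S) : ∃ T ∈ S, x ∈ T := by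
  have : Nonempty S := hne.to_subtype
  rw [← SetLike.mem_coe, sSup_eq_iSup', Subalgebra.coe_iSup_of_directed hS.directed_val,
    Set.mem_iUnion] at hx
  obtain ⟨T, hxT⟩ := hx
  exact ⟨T, T.2, hxT⟩

section Graph

variable {K M A : Type*} [CommRing K] [Ring M] [Ring A] [Algebra K M] [Algebra K A]

/-- Since `G` is closed under subtraction, this says that `G` is the graph of a partial map
`M → A`. -/
def Subalgebra.IsGraph (G : Subalgebra K (M × A)) : Prop :=
  ∀ z ∈ G, z.1 = 0 → z.2 = 0

theorem Subalgebra.IsGraph.exists_algHom_apply_fst_eq_snd {G : Subalgebra K (M × A)}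
    (hG : G.IsGraph) :
    ∃ f : G.map (AlgHom.fst K M A) →ₐ[K] A,
      ∀ z (hz : z ∈ G), f ⟨z.1, Subalgebra.mem_map.2 ⟨z, hz, rfl⟩⟩ = z.2 := by
  have hinj : Function.Injective ((AlgHom.fst K M A).comp G.val) :=
    (injective_iff_map_eq_zero _).2 fun z hz => Subtype.ext (Prod.ext hz (hG z z.2 hz))
  have hrange : ((AlgHom.fst K M A).comp G.val).range = G.map (AlgHom.fst K M A) := by
    rw [AlgHom.range_comp, Subalgebra.range_val]
  let e := (AlgEquiv.ofInjective _ hinj).trans (Subalgebra.equivOfEq _ _ hrange)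
  refine ⟨((AlgHom.snd K M A).comp G.val).comp e.symm.toAlgHom, fun z hz => ?_⟩
  have : e.symm ⟨z.1, Subalgebra.mem_map.2 ⟨z, hz, rfl⟩⟩ = ⟨z, hz⟩ := e.symm_apply_eq.2 rfl
  simp [this]

end Graph

section PowMem

variable {K M A : Type*} [Field K] [Field M] [CommRing A] [Algebra K M] [Algebra K A]

theorem isPurelyInseparable_of_pow_mem_range (p : ℕ) [ExpChar K p]
    (h : ∀ m : M, m ^ p ∈ (algebraMap K M).range) : IsPurelyInseparable K M :=
  (isPurelyInseparable_iff_pow_mem K p).2 fun m => ⟨1, by simpa using h m⟩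

variable {p : ℕ} [Fact p.Prime] [CharP K p]

theorem Subalgebra.IsGraph.exists_le_mem_map_fst
    (hpow : ∀ m : M, ∃ x : K, ∃ a : A, algebraMap K M x = m ^ p ∧ algebraMap K A x = a ^ p)
    {G : Subalgebra K (M × A)} (hG : G.IsGraph) {m : M} (hm : m ∉ G.map (AlgHom.fst K M A)) :
    ∃ G' : Subalgebra K (M × A), G'.IsGraph ∧ G ≤ G' ∧ m ∈ G'.map (AlgHom.fst K M A) := by
  set L := G.map (AlgHom.fst K M A)
  obtain ⟨f, hf⟩ := hG.exists_algHom_apply_fst_eq_snd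
  have := isPurelyInseparable_of_pow_mem_range p fun m =>
    let ⟨x, _, hx, _⟩ := hpow m; ⟨x, hx⟩
  let _ : Field L := (Subalgebra.isField_of_algebraic L).toField
  let _ : Algebra L A := f.toAlgebra
  have : IsScalarTower K L A := .of_algebraMap_eq fun x => (f.commutes x).symm
  have : CharP M p := charP_of_injective_algebraMap' K p
  obtain ⟨x, a, hxm, hxa⟩ := hpow m
  obtain ⟨g⟩ := nonempty_algHom_adjoin_of_pow_eq (L := L) (A := A) (c := algebraMap K L x)
    (fun ⟨l, hl⟩ => hm (hl ▸ l.2)) hxm (by rw [← IsScalarTower.algebraMap_apply, hxa])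
  refine ⟨(((Algebra.adjoin L {m}).val.prod g).range).restrictScalars K, ?_, fun z hz => ?_,
    ⟨_, ⟨⟨m, Algebra.self_mem_adjoin_singleton L m⟩, rfl⟩, rfl⟩⟩
  · rintro _ ⟨y, rfl⟩ (hy : (y : M) = 0)
    simp [show y = 0 from Subtype.ext hy]
  · have hz1 : z.1 ∈ L := Subalgebra.mem_map.2 ⟨z, hz, rfl⟩
    refine ⟨algebraMap L _ ⟨z.1, hz1⟩, Prod.ext rfl ?_⟩
    simpa [RingHom.algebraMap_toAlgebra] using hf z hz

theorem nonempty_algHom_of_pow_mem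
    (hpow : ∀ m : M, ∃ x : K, ∃ a : A, algebraMap K M x = m ^ p ∧ algebraMap K A x = a ^ p) :
    Nonempty (M →ₐ[K] A) := by
  obtain ⟨G, -, hGmax⟩ := zorn_le_nonempty₀ {G : Subalgebra K (M × A) | G.IsGraph}
    (fun c hcS hc G₀ hG₀ => ⟨sSup c, fun z hz =>
      let ⟨G, hG, hzG⟩ :=
        Subalgebra.exists_mem_of_mem_sSup_of_directedOn ⟨G₀, hG₀⟩ hc.directedOn hz
      hcS hG z hzG, fun _ => le_sSup⟩)
    ⊥ (by rintro _ ⟨x, rfl⟩ hx; simp_all)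
  have htop : G.map (AlgHom.fst K M A) = ⊤ := by
    refine eq_top_iff.2 fun m _ => by_contra fun hm => ?_
    obtain ⟨G', hG', hGG', hmG'⟩ := hGmax.prop.exists_le_mem_map_fst hpow hm
    exact hm (Subalgebra.map_mono (hGmax.eq_of_ge hG' hGG').le hmG')
  obtain ⟨f, -⟩ := hGmax.prop.exists_algHom_apply_fst_eq_snd
  exact ⟨f.comp ((Subalgebra.equivOfEq _ _ htop).trans Subalgebra.topEquiv).symm.toAlgHom⟩

theorem exists_algHom_comp_eq_of_pow_mem {C : Type*} [CommRing C] (g : A →+* C) (h : M →+* C)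
    (hgh : ∀ x : K, g (algebraMap K A x) = h (algebraMap K M x))
    (hpow : ∀ m : M, ∃ x : K, ∃ a : A,
      algebraMap K M x = m ^ p ∧ algebraMap K A x = a ^ p ∧ g a = h m) :
    ∃ ψ : M →ₐ[K] A, g.comp ψ = h := by
  let P : Subalgebra K (A × M) :=
    { toSubsemiring := (g.comp (RingHom.fst A M)).eqLocusS (h.comp (RingHom.snd A M))
      algebraMap_mem' := hgh }
  obtain ⟨ψ⟩ := nonempty_algHom_of_pow_mem (A := P) fun m =>
    let ⟨x, a, hxm, hxa, hga⟩ := hpow m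
    ⟨x, ⟨(a, m), hga⟩, hxm, Subtype.ext (Prod.ext hxa hxm)⟩
  have := isPurelyInseparable_of_pow_mem_range p fun m =>
    let ⟨x, _, hx, _⟩ := hpow m; ⟨x, hx⟩
  have hsnd : (AlgHom.snd K A M).comp (P.val.comp ψ) = AlgHom.id K M := Subsingleton.elim _ _
  refine ⟨(AlgHom.fst K A M).comp (P.val.comp ψ), RingHom.ext fun m => ?_⟩
  calc g (ψ m).1.1 = h (ψ m).1.2 := (ψ m).2
    _ = h m := congrArg h (AlgHom.congr_fun hsnd m)

end PowMem

theorem BOp.counit_tmul_one {k T B : Type*} [CommSemiring k] [CommSemiring T] [Algebra k T]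
    [CommSemiring B] [Algebra k B] (π : B →ₐ[k] k) (t : T) :
    BOp.counit k T B π (t ⊗ₜ[k] (1 : B)) = t := by
  simp [BOp.counit]

theorem BOperator.lift_of_purely_inseparable_general
    (p : ℕ) [Fact p.Prime] (k : Type*) [Field k] [CharP k p]
    (B : Type*) [CommRing B] [Algebra k B] (π : B →ₐ[k] k)
    (K M T : Type*) [Field K] [Field M] [CommRing T]
    [Algebra k K] [Algebra k M] [Algebra k T] [Algebra K M] [IsScalarTower k K M]
    (δK : K →ₐ[k] T ⊗[k] B)
    (hconst : ∀ m : M, ∃ x : K, algebraMap K M x = m ^ p ∧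
      δK x = (((BOp.counit k T B π).comp δK) x) ⊗ₜ[k] (1 : B))
    (b : M →ₐ[k] T)
    (hb : b.comp (IsScalarTower.toAlgHom k K M) = (BOp.counit k T B π).comp δK) :
    ∃ δM : M →ₐ[k] T ⊗[k] B,
      (BOp.counit k T B π).comp δM = b ∧
        δM.comp (IsScalarTower.toAlgHom k K M) = δK := by
  have : CharP K p := charP_of_injective_algebraMap' k p
  let _ : Algebra K (T ⊗[k] B) := δK.toAlgebra
  have : IsScalarTower k K (T ⊗[k] B) := .of_algebraMap_eq fun r => (δK.commutes r).symm
  have hroot : ∀ m : M, ∃ x : K, ∃ a : T ⊗[k] B, algebraMap K M x = m ^ p ∧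
      algebraMap K (T ⊗[k] B) x = a ^ p ∧ BOp.counit k T B π a = b m := by
    intro m
    obtain ⟨x, hx, hδx⟩ := hconst m
    have hbx : (BOp.counit k T B π).comp δK x = b m ^ p := by
      rw [← hb, AlgHom.comp_apply, IsScalarTower.coe_toAlgHom', hx, map_pow]
    refine ⟨x, b m ⊗ₜ 1, hx, ?_, BOp.counit_tmul_one π (b m)⟩
    rw [RingHom.algebraMap_toAlgebra, AlgHom.toRingHom_eq_coe, RingHom.coe_coe, hδx, hbx,
      Algebra.TensorProduct.tmul_pow, one_pow]
  obtain ⟨ψ, hψ⟩ := exists_algHom_comp_eq_of_pow_mem (BOp.counit k T B π).toRingHom b.toRingHom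
    (fun x => (AlgHom.congr_fun hb x).symm) hroot
  exact ⟨ψ.restrictScalars k, AlgHom.ext (RingHom.congr_fun hψ), AlgHom.ext ψ.commutes⟩

/-- Let `k` be a field of characteristic `p > 0` and `B` a commutative `k`-algebra with
`π : B → k` such that `x ^ p = 0` for all `x ∈ ker π`. Let `k ⊆ K ⊆ M` be a tower of fields,
`T` a `k`-algebra, and `δK : K → T ⊗[k] B` a `B`-operator such that `m ^ p` lies in `K` and in
the constants of `δK` for every `m ∈ M`. If `b : M → T` is a `k`-algebra homomorphism with
`b|_K = δK₀`, then there exists a `B`-operator `δM : M → T ⊗[k] B` (a lifting of `b`)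
with `(id_T ⊗ π) ∘ δM = b` and `δM|_K = δK`. -/
theorem BOperator.lift_of_purely_inseparable
    (p : ℕ) [Fact p.Prime] (k : Type*) [Field k] [CharP k p]
    (B : Type*) [CommRing B] [Algebra k B] (π : B →ₐ[k] k)
    (hπ : ∀ x ∈ RingHom.ker π, x ^ p = 0)
    (K M T : Type*) [Field K] [Field M] [CommRing T]
    [Algebra k K] [Algebra k M] [Algebra k T] [Algebra K M] [IsScalarTower k K M]
    (δK : K →ₐ[k] T ⊗[k] B)
    (hconst : ∀ m : M, ∃ x : K, algebraMap K M x = m ^ p ∧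
      δK x = (((BOp.counit k T B π).comp δK) x) ⊗ₜ[k] (1 : B))
    (b : M →ₐ[k] T)
    (hb : b.comp (IsScalarTower.toAlgHom k K M) = (BOp.counit k T B π).comp δK) :
    ∃ δM : M →ₐ[k] T ⊗[k] B,
      (BOp.counit k T B π).comp δM = b ∧
        δM.comp (IsScalarTower.toAlgHom k K M) = δK :=
  BOperator.lift_of_purely_inseparable_general p k B π K M T δK hconst b hb
end

section
/- Let k be a field, B a commutative k-algebra with a k-algebra homomorphism π : B → k, and (K, ∂) a field extension of k with a B-operator ∂ on K. Let R and S be K-algebras equipped with B-operators ∂_R : R → R ⊗_k B and ∂_S : S → S ⊗_k B extending ∂ (i.e. ∂_R ∘ (K → R) = ((K → R) ⊗ id_B) ∘ ∂, and similarly for S). Then there exists a unique B-operator D : R ⊗_K S → (R ⊗_K S) ⊗_k B on R ⊗_K S such that the natural maps R → R ⊗_K S and S → R ⊗_K S preserve the B-operators, i.e. D(r ⊗ 1) = ((r ↦ r ⊗ 1) ⊗ id_B)(∂_R(r)) and D(1 ⊗ s) = ((s ↦ 1 ⊗ s) ⊗ id_B)(∂_S(s)) for all r ∈ R, s ∈ S.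 -/
/-! Since `∂_R` and `∂_S` both extend `∂`, the maps `(r ↦ r ⊗ 1) ⊗ id_B ∘ ∂_R` and
`(s ↦ 1 ⊗ s) ⊗ id_B ∘ ∂_S` agree on `K`, so the universal property of `R ⊗[K] S` glues them into
`D`. A `k`-algebra map out of `R ⊗[K] S` is determined by its values on the `r ⊗ 1` and `1 ⊗ s`;
this gives uniqueness, and also `(id ⊗ π) ∘ D = id`, because `id ⊗ π` is natural and both sides
agree on `R` and on `S`. -/

open TensorProduct

attribute [local instance 2000] Algebra.toModule

namespace Algebra.TensorProduct

variable {k K R S T : Type*} [CommSemiring k] [CommSemiring K] [Algebra k K]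
  [CommSemiring R] [Algebra k R] [Algebra K R] [IsScalarTower k K R]
  [CommSemiring S] [Algebra k S] [Algebra K S] [IsScalarTower k K S]
  [CommSemiring T] [Algebra k T]

theorem algHom_ext_of_tower {f g : R ⊗[K] S →ₐ[k] T}
    (hl : f.comp includeLeft = g.comp includeLeft)
    (hr : f.comp (includeRight.restrictScalars k) = g.comp (includeRight.restrictScalars k)) :
    f = g :=
  AlgHom.coe_ringHom_injective <|
    ringHom_ext (congrArg AlgHom.toRingHom hl) (congrArg AlgHom.toRingHom hr)

theorem exists_lift_of_comp_eq (fR : R →ₐ[k] T) (fS : S →ₐ[k] T)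
    (h : fR.comp (IsScalarTower.toAlgHom k K R) = fS.comp (IsScalarTower.toAlgHom k K S)) :
    ∃ F : R ⊗[K] S →ₐ[k] T,
      F.comp includeLeft = fR ∧ F.comp (includeRight.restrictScalars k) = fS := by
  -- `T` becomes a `K`-algebra through `R`; `h` says that `S` induces the same structure.
  let _ : Algebra K T := (fR.comp (IsScalarTower.toAlgHom k K R)).toRingHom.toAlgebra
  have : IsScalarTower k K T := IsScalarTower.of_algebraMap_eq fun x => by
    simp [RingHom.algebraMap_toAlgebra]
  let gR : R →ₐ[K] T := { fR with commutes' := fun _ => rfl }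
  let gS : S →ₐ[K] T := { fS with commutes' := fun x => (AlgHom.congr_fun h x).symm }
  exact ⟨(productMap gR gS).restrictScalars k, by ext; simp [gR], by ext; simp [gS]⟩

end Algebra.TensorProduct

theorem BOp.counit_comp_map_s9 {k B : Type*} [CommSemiring k] [CommSemiring B] [Algebra k B]
    (π : B →ₐ[k] k) {T T' : Type*} [CommSemiring T] [Algebra k T]
    [CommSemiring T'] [Algebra k T'] (f : T →ₐ[k] T') :
    (BOp.counit k T' B π).comp (Algebra.TensorProduct.map f (AlgHom.id k B)) =
      f.comp (BOp.counit k T B π) := by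
  ext <;> simp [BOp.counit]

theorem BOperator.tensorProduct_unique_general
    (k B : Type*) [Field k] [CommRing B] [Algebra k B] (π : B →ₐ[k] k)
    (K : Type*) [Field K] [Algebra k K]
    (δ : K →ₐ[k] K ⊗[k] B)
    (R S : Type*) [CommRing R] [Algebra k R] [Algebra K R] [IsScalarTower k K R]
    [CommRing S] [Algebra k S] [Algebra K S] [IsScalarTower k K S]
    (δR : R →ₐ[k] R ⊗[k] B)
    (hR0 : (BOp.counit k R B π).comp δR = AlgHom.id k R)
    (hRext : δR.comp (IsScalarTower.toAlgHom k K R) =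
      (Algebra.TensorProduct.map (IsScalarTower.toAlgHom k K R) (AlgHom.id k B)).comp δ)
    (δS : S →ₐ[k] S ⊗[k] B)
    (hS0 : (BOp.counit k S B π).comp δS = AlgHom.id k S)
    (hSext : δS.comp (IsScalarTower.toAlgHom k K S) =
      (Algebra.TensorProduct.map (IsScalarTower.toAlgHom k K S) (AlgHom.id k B)).comp δ) :
    ∃! D : (R ⊗[K] S) →ₐ[k] (R ⊗[K] S) ⊗[k] B,
      (BOp.counit k (R ⊗[K] S) B π).comp D = AlgHom.id k (R ⊗[K] S) ∧
      D.comp (Algebra.TensorProduct.includeLeft : R →ₐ[k] R ⊗[K] S) =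
        (Algebra.TensorProduct.map
          (Algebra.TensorProduct.includeLeft : R →ₐ[k] R ⊗[K] S) (AlgHom.id k B)).comp δR ∧
      D.comp ((Algebra.TensorProduct.includeRight : S →ₐ[K] R ⊗[K] S).restrictScalars k) =
        (Algebra.TensorProduct.map
          ((Algebra.TensorProduct.includeRight : S →ₐ[K] R ⊗[K] S).restrictScalars k)
          (AlgHom.id k B)).comp δS := by
  set incL : R →ₐ[k] R ⊗[K] S := Algebra.TensorProduct.includeLeft
  set incR : S →ₐ[k] R ⊗[K] S :=
    (Algebra.TensorProduct.includeRight : S →ₐ[K] R ⊗[K] S).restrictScalars k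
  have hinc : incL.comp (IsScalarTower.toAlgHom k K R) =
      incR.comp (IsScalarTower.toAlgHom k K S) := by
    ext; simp [incL, incR, Algebra.TensorProduct.algebraMap_apply]
  obtain ⟨D, hDL, hDR⟩ := Algebra.TensorProduct.exists_lift_of_comp_eq (K := K)
    ((Algebra.TensorProduct.map incL (AlgHom.id k B)).comp δR)
    ((Algebra.TensorProduct.map incR (AlgHom.id k B)).comp δS) <| by
      rw [AlgHom.comp_assoc, hRext, AlgHom.comp_assoc, hSext, ← AlgHom.comp_assoc,
        ← AlgHom.comp_assoc]
      simp only [← Algebra.TensorProduct.map_comp, AlgHom.comp_id, hinc]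
  refine ⟨D, ⟨?_, hDL, hDR⟩, fun D' hD' => Algebra.TensorProduct.algHom_ext_of_tower
    (hD'.2.1.trans hDL.symm) (hD'.2.2.trans hDR.symm)⟩
  apply Algebra.TensorProduct.algHom_ext_of_tower
  · rw [AlgHom.comp_assoc, hDL, ← AlgHom.comp_assoc, BOp.counit_comp_map_s9, AlgHom.comp_assoc, hR0]
    rfl
  · rw [AlgHom.comp_assoc, hDR, ← AlgHom.comp_assoc, BOp.counit_comp_map_s9, AlgHom.comp_assoc, hS0]
    rfl

/-- (Proposition 2.15.) Let `(K, δ)` be a field with a `B`-operator and let `R`, `S` be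
`K`-algebras with `B`-operators `δR`, `δS` extending `δ`. Then there is a unique `B`-operator
`D` on `R ⊗[K] S` such that the natural maps `R → R ⊗[K] S` and `S → R ⊗[K] S` preserve the
corresponding `B`-operators. -/
theorem BOperator.tensorProduct_unique
    (k B : Type*) [Field k] [CommRing B] [Algebra k B] (π : B →ₐ[k] k)
    (K : Type*) [Field K] [Algebra k K]
    (δ : K →ₐ[k] K ⊗[k] B)
    (hδ0 : (BOp.counit k K B π).comp δ = AlgHom.id k K)
    (R S : Type*) [CommRing R] [Algebra k R] [Algebra K R] [IsScalarTower k K R]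
    [CommRing S] [Algebra k S] [Algebra K S] [IsScalarTower k K S]
    (δR : R →ₐ[k] R ⊗[k] B)
    (hR0 : (BOp.counit k R B π).comp δR = AlgHom.id k R)
    (hRext : δR.comp (IsScalarTower.toAlgHom k K R) =
      (Algebra.TensorProduct.map (IsScalarTower.toAlgHom k K R) (AlgHom.id k B)).comp δ)
    (δS : S →ₐ[k] S ⊗[k] B)
    (hS0 : (BOp.counit k S B π).comp δS = AlgHom.id k S)
    (hSext : δS.comp (IsScalarTower.toAlgHom k K S) =
      (Algebra.TensorProduct.map (IsScalarTower.toAlgHom k K S) (AlgHom.id k B)).comp δ) :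
    ∃! D : (R ⊗[K] S) →ₐ[k] (R ⊗[K] S) ⊗[k] B,
      (BOp.counit k (R ⊗[K] S) B π).comp D = AlgHom.id k (R ⊗[K] S) ∧
      D.comp (Algebra.TensorProduct.includeLeft : R →ₐ[k] R ⊗[K] S) =
        (Algebra.TensorProduct.map
          (Algebra.TensorProduct.includeLeft : R →ₐ[k] R ⊗[K] S) (AlgHom.id k B)).comp δR ∧
      D.comp ((Algebra.TensorProduct.includeRight : S →ₐ[K] R ⊗[K] S).restrictScalars k) =
        (Algebra.TensorProduct.map
          ((Algebra.TensorProduct.includeRight : S →ₐ[K] R ⊗[K] S).restrictScalars k)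
          (AlgHom.id k B)).comp δS :=
  BOperator.tensorProduct_unique_general k B π K δ R S δR hR0 hRext δS hS0 hSext
end

section
/- Let k be a field, B a commutative k-algebra with a k-algebra homomorphism π : B → k, K a field extension of k with a B-operator ∂ : K → K ⊗_k B, and let V be a K-subspace of a K-vector space W. Let D : V → W ⊗_k B be a ∂-operator, i.e. an additive map with D(α • v) = ∂(α) · D(v) for α ∈ K, v ∈ V, where W ⊗_k B is regarded as a module over K ⊗_k B via the natural isomorphism W ⊗_k B ≅ W ⊗_K (K ⊗_k B). Then for every n ∈ ℕ there exists a ∂-operator Λ : ⋀^n_K V → (⋀^n_K W) ⊗_k B (additive with Λ(α • x) = ∂(α) · Λ(x)) such that whenever v₁, …, vₙ ∈ V satisfy D(vᵢ) = vᵢ ⊗ 1_B for all i, one has Λ(v₁ ∧ … ∧ vₙ) = (v₁ ∧ … ∧ vₙ) ⊗ 1_B, where on the right the wedge is taken in ⋀^n_K W via the inclusion V ⊆ W. -/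
/-!
Make `⋀_K W ⊗_k B` a `K`-algebra by letting `α` act as multiplication by the image of `δ(α)`
under `K ⊗_k B → ⋀_K W ⊗_k B`, which is central. Then `v ↦ (ι ⊗ id)(D v)` is `K`-linear on `V`,
and it squares to zero because `ι ⊗ id` anticommutes with itself on pure tensors and `B` is
commutative. So it extends to a `K`-algebra map `F : ⋀_K V → ⋀_K W ⊗_k B`, which carries
`⋀^n_K V` into `⋀^n_K W ⊗_k B`; the latter embeds into `⋀_K W ⊗_k B` because `B` is flat over
the field `k`, and `Λ` is `F` restricted to `⋀^n_K V`. On constants,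
`F (v₁ ∧ ⋯ ∧ vₙ) = ∏ (vᵢ ⊗ 1) = (v₁ ∧ ⋯ ∧ vₙ) ⊗ 1`.
-/

open TensorProduct

/-- The natural action of `K ⊗[k] B` on `W ⊗[k] B` (coming from the identification
`W ⊗[k] B ≅ W ⊗[K] (K ⊗[k] B)`), determined by `(α ⊗ b) • (w ⊗ c) = (α • w) ⊗ (b * c)`. -/
noncomputable def BOp.act (k K B : Type*) [Field k] [Field K] [Algebra k K]
    [CommRing B] [Algebra k B] (W : Type*) [AddCommGroup W] [Module k W] [Module K W]
    [IsScalarTower k K W] :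
    (K ⊗[k] B) →ₗ[k] (W ⊗[k] B) →ₗ[k] (W ⊗[k] B) :=
  TensorProduct.curry <|
    (TensorProduct.map
      (TensorProduct.lift
        { toFun := fun α => α • (LinearMap.id : W →ₗ[k] W)
          map_add' := fun a b => add_smul a b _
          map_smul' := fun a b => smul_assoc a b _ })
      (LinearMap.mul' k B)).comp
      (TensorProduct.tensorTensorTensorComm k K B W B).toLinearMap

namespace BOperator

section RTensor

variable {k R B : Type*} [CommSemiring k] [Semiring R] [Algebra k R] [CommSemiring B] [Algebra k B]
  {M N P : Type*} [AddCommMonoid M] [Module k M] [AddCommMonoid N] [Module k N]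
  [AddCommMonoid P] [Module k P]

lemma rTensor_mul_rTensor_mem_range (f : M →ₗ[k] R) (g : N →ₗ[k] R) (h : P →ₗ[k] R)
    (hfg : ∀ m n, f m * g n ∈ LinearMap.range h) (x : M ⊗[k] B) (y : N ⊗[k] B) :
    f.rTensor B x * g.rTensor B y ∈ LinearMap.range (h.rTensor B) := by
  induction x using TensorProduct.induction_on with
  | zero => simp
  | add x x' hx hx' => rw [map_add, add_mul]; exact add_mem hx hx'
  | tmul m b =>
    induction y using TensorProduct.induction_on with
    | zero => simp
    | add y y' hy hy' => rw [map_add, mul_add]; exact add_mem hy hy'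
    | tmul n c =>
      obtain ⟨p, hp⟩ := hfg m n
      exact ⟨p ⊗ₜ[k] (b * c), by simp [hp]⟩

variable (f : M →ₗ[k] R) (hf : ∀ m, f m * f m = 0)
include hf

lemma rTensor_mul_add_mul_swap_eq_zero (x y : M ⊗[k] B) :
    f.rTensor B x * f.rTensor B y + f.rTensor B y * f.rTensor B x = 0 := by
  have polarization (m m' : M) : f m * f m' + f m' * f m = 0 := by
    simpa [hf, add_mul, mul_add, add_comm] using hf (m + m')
  induction x using TensorProduct.induction_on with
  | zero => simp
  | add x x' hx hx' => rw [map_add, add_mul, mul_add, add_add_add_comm, hx, hx', add_zero]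
  | tmul m b =>
    induction y using TensorProduct.induction_on with
    | zero => simp
    | add y y' hy hy' => rw [map_add, add_mul, mul_add, add_add_add_comm, hy, hy', add_zero]
    | tmul m' c =>
      rw [LinearMap.rTensor_tmul, LinearMap.rTensor_tmul, Algebra.TensorProduct.tmul_mul_tmul,
        Algebra.TensorProduct.tmul_mul_tmul, mul_comm c b, ← add_tmul, polarization, zero_tmul]

lemma rTensor_mul_self_eq_zero (x : M ⊗[k] B) : f.rTensor B x * f.rTensor B x = 0 := by
  induction x using TensorProduct.induction_on with
  | zero => simp
  | add x y hx hy =>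
    rw [map_add, add_mul, mul_add, mul_add, hx, hy, zero_add, add_zero, add_comm,
      rTensor_mul_add_mul_swap_eq_zero f hf]
  | tmul m b =>
    rw [LinearMap.rTensor_tmul, Algebra.TensorProduct.tmul_mul_tmul, hf, zero_tmul]

end RTensor

section Twist

variable {k K B : Type*} [CommSemiring k] [CommSemiring K] [Algebra k K] [CommSemiring B]
  [Algebra k B] (A : Type*) [Semiring A] [Algebra k A] [Algebra K A] [IsScalarTower k K A]

def algebraMapTensor : K ⊗[k] B →ₐ[k] A ⊗[k] B :=
  Algebra.TensorProduct.map (IsScalarTower.toAlgHom k K A) (AlgHom.id k B)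

@[simp] lemma algebraMapTensor_tmul (α : K) (b : B) :
    algebraMapTensor A (α ⊗ₜ[k] b) = algebraMap K A α ⊗ₜ[k] b := rfl

lemma commute_algebraMapTensor (u : K ⊗[k] B) (y : A ⊗[k] B) :
    Commute (algebraMapTensor A u) y := by
  induction u using TensorProduct.induction_on with
  | zero => simp
  | add u u' hu hu' => rw [map_add]; exact hu.add_left hu'
  | tmul α b =>
    induction y using TensorProduct.induction_on with
    | zero => simp
    | add y y' hy hy' => exact hy.add_right hy'
    | tmul a c =>
      rw [algebraMapTensor_tmul, Commute, SemiconjBy, Algebra.TensorProduct.tmul_mul_tmul,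
        Algebra.TensorProduct.tmul_mul_tmul, Algebra.commutes α a, mul_comm b c]

/-- A copy of `A ⊗[k] B` whose only role is to carry the `K`-algebra structure
`algebraMap α = algebraMapTensor A (δ α)`, distinct from the one through the left factor. -/
def TwistedTensor (_δ : K →ₐ[k] K ⊗[k] B) : Type _ := A ⊗[k] B

variable (δ : K →ₐ[k] K ⊗[k] B)

instance : Semiring (TwistedTensor A δ) := inferInstanceAs (Semiring (A ⊗[k] B))

instance : Algebra K (TwistedTensor A δ) :=
  RingHom.toAlgebra' (S := TwistedTensor A δ) ((algebraMapTensor A).toRingHom.comp δ.toRingHom)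
    fun α => commute_algebraMapTensor A (δ α)

end Twist

section Act

variable {k K B : Type*} [Field k] [Field K] [Algebra k K] [CommRing B] [Algebra k B]
  {N : Type*} [AddCommGroup N] [Module k N] [Module K N] [IsScalarTower k K N]

@[simp] lemma act_tmul (α : K) (b : B) (n : N) (c : B) :
    BOp.act k K B N (α ⊗ₜ[k] b) (n ⊗ₜ[k] c) = (α • n) ⊗ₜ[k] (b * c) := by
  simp [BOp.act]

lemma rTensor_act {A : Type*} [Semiring A] [Algebra k A] [Algebra K A] [IsScalarTower k K A]
    (g : N →ₗ[K] A) (u : K ⊗[k] B) (x : N ⊗[k] B) :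
    (g.restrictScalars k).rTensor B (BOp.act k K B N u x)
      = algebraMapTensor A u * (g.restrictScalars k).rTensor B x := by
  induction u using TensorProduct.induction_on with
  | zero => simp
  | add u u' hu hu' => simp only [map_add, LinearMap.add_apply, add_mul, hu, hu']
  | tmul α b =>
    induction x using TensorProduct.induction_on with
    | zero => simp
    | add x y hx hy => simp only [map_add, hx, hy, mul_add]
    | tmul n c =>
      rw [act_tmul, LinearMap.rTensor_tmul, LinearMap.rTensor_tmul, algebraMapTensor_tmul,
        Algebra.TensorProduct.tmul_mul_tmul, LinearMap.restrictScalars_apply, map_smul,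
        Algebra.smul_def, LinearMap.restrictScalars_apply]

end Act

section Exterior

open ExteriorAlgebra

variable {k K B : Type*} [CommSemiring k] [CommRing K] [Algebra k K] [CommSemiring B]
  [Algebra k B] {δ : K →ₐ[k] K ⊗[k] B} {W : Type*} [AddCommGroup W] [Module K W] [Module k W]
  [IsScalarTower k K W] {V : Type*} [AddCommGroup V] [Module K V]

lemma algHom_ιMulti_eq_tmul_one
    (F : ExteriorAlgebra K V →ₐ[K] TwistedTensor (ExteriorAlgebra K W) δ)
    {n : ℕ} (v : Fin n → V) (w : Fin n → W) (hvw : ∀ i, F (ι K (v i)) = ι K (w i) ⊗ₜ[k] (1 : B)) :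
    F (ιMulti K n v) = ιMulti K n w ⊗ₜ[k] (1 : B) := by
  rw [ιMulti_apply, ιMulti_apply, map_list_prod, List.map_ofFn]
  change _ = Algebra.TensorProduct.includeLeft (S := k) (B := B) _
  rw [map_list_prod, List.map_ofFn]
  congr 2
  funext i
  exact hvw i

lemma algHom_mem_range_rTensor_exteriorPower
    (F : ExteriorAlgebra K V →ₐ[K] TwistedTensor (ExteriorAlgebra K W) δ)
    (hF : ∀ v, F (ι K v) ∈ LinearMap.range (((ι K).restrictScalars k).rTensor B))
    {n : ℕ} {x : ExteriorAlgebra K V} (hx : x ∈ ⋀[K]^n V) :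
    F x ∈ LinearMap.range (((⋀[K]^n W).subtype.restrictScalars k).rTensor B) := by
  induction hx using Submodule.pow_induction_on_left' with
  | algebraMap r =>
    rw [AlgHom.commutes]
    change algebraMapTensor _ (δ r) ∈ _
    induction δ r using TensorProduct.induction_on with
    | zero => rw [map_zero]; exact zero_mem _
    | add u u' hu hu' => rw [map_add]; exact add_mem hu hu'
    | tmul α b =>
      have hα : algebraMap K _ α ∈ ⋀[K]^0 W := by
        rw [exteriorPower, pow_zero]; exact Submodule.algebraMap_mem α
      exact ⟨⟨algebraMap K _ α, hα⟩ ⊗ₜ[k] b, rfl⟩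
  | add x y i _ _ hx hy => rw [map_add]; exact add_mem hx hy
  | mem_mul m hm i x _ hx =>
    obtain ⟨v, rfl⟩ := hm
    obtain ⟨y, hy⟩ := hF v
    obtain ⟨z, hz⟩ := hx
    rw [map_mul, ← hy, ← hz]
    refine rTensor_mul_rTensor_mem_range _ _ _ (fun w z => ?_) y z
    have hmem : ι K w * z ∈ ⋀[K]^(i + 1) W := by
      rw [exteriorPower, pow_succ']
      exact Submodule.mul_mem_mul (LinearMap.mem_range_self _ w) z.2
    exact ⟨⟨_, hmem⟩, rfl⟩

end Exterior

end BOperator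

theorem BOperator.exists_exteriorPower_partialOperator_general
    (k K B : Type*) [Field k] [Field K] [Algebra k K] [CommRing B] [Algebra k B]
    (δ : K →ₐ[k] K ⊗[k] B)
    (W : Type*) [AddCommGroup W] [Module k W] [Module K W] [IsScalarTower k K W]
    (V : Submodule K W)
    (D : V → W ⊗[k] B)
    (hDadd : ∀ u v : V, D (u + v) = D u + D v)
    (hDsmul : ∀ (α : K) (v : V), D (α • v) = BOp.act k K B W (δ α) (D v))
    (n : ℕ)
    :
    ∃ Λ : (⋀[K]^n V) → (⋀[K]^n W) ⊗[k] B,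
      (∀ x y : ⋀[K]^n V, Λ (x + y) = Λ x + Λ y) ∧
      (∀ (α : K) (x : ⋀[K]^n V), Λ (α • x) = BOp.act k K B (⋀[K]^n W) (δ α) (Λ x)) ∧
      (∀ v : Fin n → V, (∀ i, D (v i) = ((v i : W) ⊗ₜ[k] (1 : B))) →
        Λ ⟨ExteriorAlgebra.ιMulti K n v, ExteriorAlgebra.ιMulti_range K n (Set.mem_range_self v)⟩
          = (⟨ExteriorAlgebra.ιMulti K n (fun i => (v i : W)),
              ExteriorAlgebra.ιMulti_range K n (Set.mem_range_self _)⟩ : ⋀[K]^n W)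
            ⊗ₜ[k] (1 : B)) := by
  let j := ((ExteriorAlgebra.ι K : W →ₗ[K] _).restrictScalars k).rTensor B
  let f : V →ₗ[K] BOperator.TwistedTensor (ExteriorAlgebra K W) δ :=
    { toFun v := j (D v)
      map_add' u v := by rw [hDadd, map_add]; rfl
      map_smul' α v := by rw [hDsmul, BOperator.rTensor_act]; rfl }
  have hf (v : V) : f v * f v = 0 :=
    BOperator.rTensor_mul_self_eq_zero ((ExteriorAlgebra.ι K).restrictScalars k)
      (ExteriorAlgebra.ι_sq_zero (R := K)) (D v)
  let F := ExteriorAlgebra.lift K ⟨f, hf⟩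
  have hFι (v : V) : F (ExteriorAlgebra.ι K v) = j (D v) := ExteriorAlgebra.lift_ι_apply K f hf v
  let incl := ((⋀[K]^n W).subtype.restrictScalars k).rTensor B
  have incl_injective : Function.Injective incl :=
    Module.Flat.rTensor_preserves_injective_linearMap _ Subtype.val_injective
  choose Λ hΛ using fun x : ⋀[K]^n V => BOperator.algHom_mem_range_rTensor_exteriorPower F
    (fun v => hFι v ▸ LinearMap.mem_range_self j (D v)) x.2
  refine ⟨Λ, fun x y => incl_injective ?_, fun α x => incl_injective ?_,
    fun v hv => incl_injective ?_⟩
  · rw [map_add, hΛ, hΛ, hΛ]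
    exact map_add F (x : ExteriorAlgebra K V) y
  · rw [BOperator.rTensor_act, hΛ, hΛ]
    exact (map_smul F α (x : ExteriorAlgebra K V)).trans (Algebra.smul_def α (F x))
  · rw [hΛ]
    exact BOperator.algHom_ιMulti_eq_tmul_one F v _ fun i => by rw [hFι, hv]; rfl

/-- (Lemma 4.4: exterior powers of `∂`-operators.) Let `(K, δ)` be a `B`-field extending `k`,
`V` a `K`-subspace of a `K`-vector space `W`, and `D : V → W ⊗[k] B` a `δ`-operator (an
additive map with `D (α • v) = δ(α) • D v`). Then for every `n` there is a `δ`-operator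
`Λ : ⋀[K]^n V → (⋀[K]^n W) ⊗[k] B` such that whenever `v₁, …, vₙ ∈ V` are constants of `D`
(i.e. `D vᵢ = vᵢ ⊗ 1`), the wedge `v₁ ∧ ⋯ ∧ vₙ` satisfies
`Λ (v₁ ∧ ⋯ ∧ vₙ) = (v₁ ∧ ⋯ ∧ vₙ) ⊗ 1`. -/
theorem BOperator.exists_exteriorPower_partialOperator
    (k K B : Type*) [Field k] [Field K] [Algebra k K] [CommRing B] [Algebra k B]
    (π : B →ₐ[k] k)
    (δ : K →ₐ[k] K ⊗[k] B) (hδ0 : (BOp.counit k K B π).comp δ = AlgHom.id k K)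
    (W : Type*) [AddCommGroup W] [Module k W] [Module K W] [IsScalarTower k K W]
    (V : Submodule K W)
    (D : V → W ⊗[k] B)
    (hDadd : ∀ u v : V, D (u + v) = D u + D v)
    (hDsmul : ∀ (α : K) (v : V), D (α • v) = BOp.act k K B W (δ α) (D v))
    (n : ℕ)
    :
    ∃ Λ : (⋀[K]^n V) → (⋀[K]^n W) ⊗[k] B,
      (∀ x y : ⋀[K]^n V, Λ (x + y) = Λ x + Λ y) ∧
      (∀ (α : K) (x : ⋀[K]^n V), Λ (α • x) = BOp.act k K B (⋀[K]^n W) (δ α) (Λ x)) ∧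
      (∀ v : Fin n → V, (∀ i, D (v i) = ((v i : W) ⊗ₜ[k] (1 : B))) →
        Λ ⟨ExteriorAlgebra.ιMulti K n v, ExteriorAlgebra.ιMulti_range K n (Set.mem_range_self v)⟩
          = (⟨ExteriorAlgebra.ιMulti K n (fun i => (v i : W)),
              ExteriorAlgebra.ιMulti_range K n (Set.mem_range_self _)⟩ : ⋀[K]^n W)
            ⊗ₜ[k] (1 : B)) :=
  BOperator.exists_exteriorPower_partialOperator_general k K B δ W V D hDadd hDsmul n
end

section
/- Let k be a field, B a commutative k-algebra with a k-algebra homomorphism π : B → k, K a field extension of k with a B-operator ∂ : K → K ⊗_k B, and let V be a K-subspace of a K-vector space W. Let D : V → W ⊗_k B be a ∂-operator and set C := K^∂ = {α ∈ K : ∂(α) = α ⊗ 1_B} (a subfield of K) and V^D := {v ∈ V : D(v) = v ⊗ 1_B} (a C-subspace of V). Then the natural map K ⊗_C V^D → V induced by scalar multiplication is injective; equivalently, every family of elements of V^D that is linearly independent over C is linearly independent over K. -/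
/-!
A `K`-linear relation `∑ gⱼ vⱼ = 0` among `D`-constants, normalised so that one coefficient is
`1`, can be "differentiated": applying `D` and subtracting the relation tensored with `1_B` gives
`∑ (∂gⱼ - gⱼ ⊗ 1) · (vⱼ ⊗ 1) = 0`. Reading this through any functional `φ` on `B` yields a
`K`-relation with strictly smaller support, since the normalised coefficient has no defect. By
induction on the support these relations are trivial, and as functionals on `B` separate the points
of `K ⊗[k] B`, every coefficient is a constant; `C`-independence then forces the relation to vanish.
-/

open TensorProduct

namespace BOp

section Contraction

variable {k M B : Type*} [Field k] [AddCommGroup M] [Module k M] [AddCommGroup B] [Module k B]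

noncomputable def applyRight (φ : Module.Dual k B) : M ⊗[k] B →ₗ[k] M :=
  (TensorProduct.rid k M).toLinearMap ∘ₗ φ.lTensor M

@[simp]
lemma applyRight_tmul (φ : Module.Dual k B) (m : M) (b : B) :
    applyRight φ (m ⊗ₜ[k] b) = φ b • m := by
  simp [applyRight]

lemma eq_zero_of_forall_applyRight_eq_zero {x : M ⊗[k] B}
    (h : ∀ φ : Module.Dual k B, applyRight φ x = 0) : x = 0 := by
  classical
  let b := Module.Basis.ofVectorSpace k B
  let e := b.repr.lTensor M ≪≫ₗ finsuppScalarRight k k M _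
  have he : ∀ y i, e y i = applyRight (b.coord i) y := by
    intro y i
    induction y using TensorProduct.induction_on with
    | zero => simp
    | tmul m c => simp [e, finsuppScalarRight_apply_tmul_apply]
    | add y z hy hz => simp only [map_add, Finsupp.add_apply, hy, hz]
  exact e.injective (by ext i; simp [he, h])

end Contraction

section Action

variable {k K B W : Type*} [Field k] [Field K] [Algebra k K] [CommRing B] [Algebra k B]
  [AddCommGroup W] [Module k W] [Module K W] [IsScalarTower k K W]

@[simp]
lemma act_tmul (α : K) (b : B) (w : W) (c : B) :
    act k K B W (α ⊗ₜ[k] b) (w ⊗ₜ[k] c) = (α • w) ⊗ₜ[k] (b * c) := by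
  simp [act, curry_apply, tensorTensorTensorComm_tmul]

lemma applyRight_act_tmul_one (φ : Module.Dual k B) (x : K ⊗[k] B) (w : W) :
    applyRight φ (act k K B W x (w ⊗ₜ[k] 1)) = applyRight φ x • w := by
  induction x using TensorProduct.induction_on with
  | zero => simp
  | tmul α b => simp [smul_assoc]
  | add x y hx hy => simp only [map_add, LinearMap.add_apply, hx, hy, add_smul]

end Action

lemma sum_applyRight_sub_smul_eq_zero {k K B W : Type*} [Field k] [Field K] [Algebra k K]
    [CommRing B] [Algebra k B] [AddCommGroup W] [Module k W] [Module K W]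
    [IsScalarTower k K W] (δ : K →ₐ[k] K ⊗[k] B) {V : Submodule K W} {D : V → W ⊗[k] B}
    (hDadd : ∀ u v : V, D (u + v) = D u + D v)
    (hDsmul : ∀ (α : K) (v : V), D (α • v) = act k K B W (δ α) (D v))
    {ι : Type*} {v : ι → V} (hv : ∀ i, D (v i) = (v i : W) ⊗ₜ[k] (1 : B))
    {s : Finset ι} {g : ι → K} (hg : ∑ j ∈ s, g j • v j = 0) (φ : Module.Dual k B) :
    ∑ j ∈ s, applyRight φ (δ (g j) - g j ⊗ₜ[k] 1) • v j = 0 := by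
  let D' : V →+ W ⊗[k] B := AddMonoidHom.mk' D hDadd
  have hD : ∑ j ∈ s, act k K B W (δ (g j)) ((v j : W) ⊗ₜ[k] 1) = 0 := by
    have hD0 := congrArg D' hg
    rw [map_sum, map_zero] at hD0
    simpa [D', hDsmul, hv] using hD0
  have hg_tmul : ∑ j ∈ s, act k K B W (g j ⊗ₜ[k] 1) ((v j : W) ⊗ₜ[k] 1) = 0 := by
    simpa [sum_tmul] using congrArg (fun u : V => (u : W) ⊗ₜ[k] (1 : B)) hg
  apply Subtype.ext
  simpa [applyRight_act_tmul_one, sub_smul, smul_assoc, Finset.sum_sub_distrib] using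
    congrArg (applyRight φ) (congrArg₂ (· - ·) hD hg_tmul)

end BOp

open BOp in
theorem BOperator.constants_linearIndependent_general
    (k K B : Type*) [Field k] [Field K] [Algebra k K] [CommRing B] [Algebra k B]
    (δ : K →ₐ[k] K ⊗[k] B)
    (W : Type*) [AddCommGroup W] [Module k W] [Module K W] [IsScalarTower k K W]
    (V : Submodule K W)
    (D : V → W ⊗[k] B)
    (hDadd : ∀ u v : V, D (u + v) = D u + D v)
    (hDsmul : ∀ (α : K) (v : V), D (α • v) = BOp.act k K B W (δ α) (D v))
    (ι : Type*) (v : ι → V)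
    (hv : ∀ i, D (v i) = ((v i : W) ⊗ₜ[k] (1 : B)))
    (hindep : ∀ (s : Finset ι) (g : ι → K), (∀ i, δ (g i) = (g i) ⊗ₜ[k] (1 : B)) →
      ∑ i ∈ s, g i • v i = 0 → ∀ i ∈ s, g i = 0) :
    LinearIndependent K v := by
  classical
  rw [linearIndependent_iff']
  intro s
  induction s using Finset.strongInduction with | H s ih => ?_
  intro g hg i hi
  by_contra hgi
  set c : ι → K := fun j => (g i)⁻¹ * g j
  have hci : c i = 1 := inv_mul_cancel₀ hgi
  have hc : ∑ j ∈ s, c j • v j = 0 := by simp [c, mul_smul, ← Finset.smul_sum, hg]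
  have hconst : ∀ j ∈ s, δ (c j) = c j ⊗ₜ[k] 1 := by
    intro j hj
    rw [← sub_eq_zero]
    refine eq_zero_of_forall_applyRight_eq_zero fun φ => ?_
    obtain rfl | hji := eq_or_ne j i
    · simp [hci, Algebra.TensorProduct.one_def]
    have hrel := sum_applyRight_sub_smul_eq_zero δ hDadd hDsmul hv hc φ
    rw [← Finset.add_sum_erase s _ hi, hci, map_one, Algebra.TensorProduct.one_def, sub_self,
      map_zero, zero_smul, zero_add] at hrel
    exact ih _ (Finset.erase_ssubset hi) _ hrel j (Finset.mem_erase.2 ⟨hji, hj⟩)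
  have hc_zero := hindep s (fun j => if j ∈ s then c j else 0)
    (fun j => by split_ifs with hj; exacts [hconst j hj, by simp])
    (by rwa [Finset.sum_congr rfl fun j hj => by rw [if_pos hj]]) i hi
  simp [hi, hci] at hc_zero

/-- (Theorem 4.6: linear disjointness.) Let `(K, δ)` be a `B`-field extending `k`, let `V` be a
`K`-subspace of a `K`-vector space `W`, and let `D : V → W ⊗[k] B` be a `δ`-operator. Let
`C = K^δ` be the constants of `δ` and `V^D` the constants of `D`. Then the natural map
`K ⊗_C V^D → V` is injective; equivalently, every family of elements of `V^D` that is linearly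
independent over `C` (expressed as: nontrivial finite linear combinations with coefficients
among the constants of `δ` do not vanish) is linearly independent over `K`. -/
theorem BOperator.constants_linearIndependent
    (k K B : Type*) [Field k] [Field K] [Algebra k K] [CommRing B] [Algebra k B]
    (π : B →ₐ[k] k)
    (δ : K →ₐ[k] K ⊗[k] B) (hδ0 : (BOp.counit k K B π).comp δ = AlgHom.id k K)
    (W : Type*) [AddCommGroup W] [Module k W] [Module K W] [IsScalarTower k K W]
    (V : Submodule K W)
    (D : V → W ⊗[k] B)
    (hDadd : ∀ u v : V, D (u + v) = D u + D v)
    (hDsmul : ∀ (α : K) (v : V), D (α • v) = BOp.act k K B W (δ α) (D v))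
    (ι : Type*) (v : ι → V)
    (hv : ∀ i, D (v i) = ((v i : W) ⊗ₜ[k] (1 : B)))
    (hindep : ∀ (s : Finset ι) (g : ι → K), (∀ i, δ (g i) = (g i) ⊗ₜ[k] (1 : B)) →
      ∑ i ∈ s, g i • v i = 0 → ∀ i ∈ s, g i = 0) :
    LinearIndependent K v :=
  BOperator.constants_linearIndependent_general k K B δ W V D hDadd hDsmul ι v hv hindep
end

section
/- Let k be a field, B a commutative k-algebra with a k-algebra homomorphism π : B → k, and let (K, ∂) ⊆ (L, ∂') be an extension of fields with B-operators (K ⊆ L and ∂'|_K equals the composition of ∂ with the map K ⊗_k B → L ⊗_k B). Then K is linearly disjoint from the constant field L^{∂'} over K^∂ inside L: the multiplication map K ⊗_{K^∂} L^{∂'} → L is injective; equivalently, every family of elements of L^{∂'} that is linearly independent over K^∂ remains linearly independent over K. -/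
/-!
Take a `K`-linear relation `∑ cᵢ vᵢ = 0` among constants of `L` of minimal support, normalized
so that `c_{i₀} = 1`. Applying `δ'` and subtracting `∑ (cᵢ vᵢ) ⊗ 1 = 0` gives
`∑ vᵢ (δ cᵢ - cᵢ ⊗ 1) = 0` in `L ⊗[k] B`, where the `i₀` term vanishes. Reading this off in a
`k`-basis of `B` yields `K`-linear relations among the `vᵢ` of smaller support, so by minimality
every `cᵢ` is a constant of `K`, and linear independence over `K^δ` gives a contradiction.
-/

open TensorProduct

section

variable {k B : Type*} [CommRing k] [CommRing B] [Algebra k B]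

theorem Module.Basis.baseChange_repr_map_apply {R S : Type*} [CommRing R] [CommRing S]
    [Algebra k R] [Algebra k S] (f : R →ₐ[k] S) {κ : Type*} (b : Module.Basis κ k B)
    (x : R ⊗[k] B) (j : κ) :
    (b.baseChange S).repr (Algebra.TensorProduct.map f (AlgHom.id k B) x) j =
      f ((b.baseChange R).repr x j) := by
  induction x using TensorProduct.induction_on with
  | zero => simp
  | tmul r y => simp [Module.Basis.baseChange_repr_tmul, Algebra.smul_def]
  | add x y hx hy => simp [hx, hy]

namespace BOperator

section

variable {K L : Type*} [CommRing K] [CommRing L] [Algebra k K] [Algebra k L] [Algebra K L]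
  [IsScalarTower k K L]

theorem eq_zero_of_sum_smul_map_eq_zero [Module.Free k B] {ι : Type*} {v : ι → L} {s : Finset ι}
    (hv : ∀ c : ι → K, ∑ i ∈ s, c i • v i = 0 → ∀ i ∈ s, c i = 0) {d : ι → K ⊗[k] B}
    (hd : ∑ i ∈ s, v i •
      Algebra.TensorProduct.map (IsScalarTower.toAlgHom k K L) (AlgHom.id k B) (d i) = 0) :
    ∀ i ∈ s, d i = 0 := by
  set b := Module.Free.chooseBasis k B
  have hcoord : ∀ j, ∑ i ∈ s, (b.baseChange K).repr (d i) j • v i = 0 := by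
    intro j
    have := congrArg (fun t => (b.baseChange L).repr t j) hd
    simp only [map_sum, map_smul, Finsupp.coe_finsetSum, Finset.sum_apply, Finsupp.smul_apply,
      Module.Basis.baseChange_repr_map_apply, map_zero, Finsupp.coe_zero, Pi.zero_apply] at this
    simpa [Algebra.smul_def, mul_comm] using this
  intro i hi
  exact (b.baseChange K).repr.injective <| Finsupp.ext fun j => by
    simpa using hv _ (hcoord j) i hi

theorem sum_smul_map_defect_eq_zero (δ : K →ₐ[k] K ⊗[k] B) (δ' : L →ₐ[k] L ⊗[k] B)
    (hext : δ'.comp (IsScalarTower.toAlgHom k K L) =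
      (Algebra.TensorProduct.map (IsScalarTower.toAlgHom k K L) (AlgHom.id k B)).comp δ)
    {ι : Type*} {v : ι → L} (hv : ∀ i, δ' (v i) = v i ⊗ₜ[k] (1 : B)) {s : Finset ι}
    {c : ι → K} (hc : ∑ i ∈ s, c i • v i = 0) :
    ∑ i ∈ s, v i • Algebra.TensorProduct.map (IsScalarTower.toAlgHom k K L) (AlgHom.id k B)
      (δ (c i) - c i ⊗ₜ[k] (1 : B)) = 0 := by
  have hterm : ∀ i, v i • Algebra.TensorProduct.map (IsScalarTower.toAlgHom k K L)
      (AlgHom.id k B) (δ (c i) - c i ⊗ₜ[k] (1 : B)) =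
      δ' (c i • v i) - (c i • v i) ⊗ₜ[k] (1 : B) := by
    intro i
    rw [map_sub, ← AlgHom.comp_apply, ← hext]
    simp [Algebra.smul_def, hv, Algebra.TensorProduct.tmul_mul_tmul, mul_sub, mul_comm]
  rw [Finset.sum_congr rfl fun i _ => hterm i, Finset.sum_sub_distrib, ← map_sum,
    ← TensorProduct.sum_tmul, hc, map_zero, TensorProduct.zero_tmul, sub_zero]

end

theorem linearIndependent_of_constants [Module.Free k B] {K L : Type*} [Field K] [CommRing L]
    [Algebra k K] [Algebra k L] [Algebra K L] [IsScalarTower k K L]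
    (δ : K →ₐ[k] K ⊗[k] B) (δ' : L →ₐ[k] L ⊗[k] B)
    (hext : δ'.comp (IsScalarTower.toAlgHom k K L) =
      (Algebra.TensorProduct.map (IsScalarTower.toAlgHom k K L) (AlgHom.id k B)).comp δ)
    {ι : Type*} {v : ι → L} (hv : ∀ i, δ' (v i) = v i ⊗ₜ[k] (1 : B))
    (hindep : ∀ (s : Finset ι) (c : ι → K), (∀ i ∈ s, δ (c i) = c i ⊗ₜ[k] (1 : B)) →
      ∑ i ∈ s, c i • v i = 0 → ∀ i ∈ s, c i = 0) :
    LinearIndependent K v := by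
  classical
  rw [linearIndependent_iff']
  intro s
  induction s using Finset.strongInduction with
  | _ s IH =>
  intro g hg i₀ hi₀
  by_contra hgi₀
  set c : ι → K := fun i => (g i₀)⁻¹ * g i
  have hc : ∑ i ∈ s, c i • v i = 0 := by
    simp only [c, mul_smul, ← Finset.smul_sum, hg, smul_zero]
  have hci₀ : c i₀ = 1 := inv_mul_cancel₀ hgi₀
  have hdefect := sum_smul_map_defect_eq_zero δ δ' hext hv hc
  rw [← Finset.add_sum_erase s _ hi₀, hci₀, map_one, ← Algebra.TensorProduct.one_def, sub_self,
    map_zero, smul_zero, zero_add] at hdefect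
  have hconst : ∀ i ∈ s, δ (c i) = c i ⊗ₜ[k] (1 : B) := by
    intro i hi
    by_cases hii₀ : i = i₀
    · rw [hii₀, hci₀, map_one, Algebra.TensorProduct.one_def]
    · exact sub_eq_zero.1 <| eq_zero_of_sum_smul_map_eq_zero (IH _ (Finset.erase_ssubset hi₀))
        hdefect i (Finset.mem_erase.2 ⟨hii₀, hi⟩)
  exact one_ne_zero (hci₀ ▸ hindep s c hconst hc i₀ hi₀)

end BOperator

end

theorem BOperator.constants_linearly_disjoint_general
    (k B : Type*) [Field k] [CommRing B] [Algebra k B]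
    (K L : Type*) [Field K] [Field L] [Algebra k K] [Algebra k L]
    [Algebra K L] [IsScalarTower k K L]
    (δ : K →ₐ[k] K ⊗[k] B)
    (δ' : L →ₐ[k] L ⊗[k] B)
    (hext : δ'.comp (IsScalarTower.toAlgHom k K L) =
      (Algebra.TensorProduct.map (IsScalarTower.toAlgHom k K L) (AlgHom.id k B)).comp δ)
    (ι : Type*) (v : ι → L)
    (hv : ∀ i, δ' (v i) = (v i) ⊗ₜ[k] (1 : B))
    (hindep : ∀ (s : Finset ι) (g : ι → K), (∀ i, δ (g i) = (g i) ⊗ₜ[k] (1 : B)) →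
      ∑ i ∈ s, g i • v i = 0 → ∀ i ∈ s, g i = 0) :
    LinearIndependent K v := by
  classical
  refine linearIndependent_of_constants δ δ' hext hv fun s c hc hs i hi => ?_
  have hconst : ∀ j, δ (if j ∈ s then c j else 0) = (if j ∈ s then c j else 0) ⊗ₜ[k] (1 : B) := by
    intro j
    split_ifs with hj
    · exact hc j hj
    · rw [map_zero, TensorProduct.zero_tmul]
  have hrel : ∑ j ∈ s, (if j ∈ s then c j else 0) • v j = 0 := by
    rwa [Finset.sum_congr rfl fun j hj => by rw [if_pos hj]]
  simpa [hi] using hindep s _ hconst hrel i hi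

/-- (Corollary 4.7.) Let `(K, δ) ⊆ (L, δ')` be an extension of fields with `B`-operators.
Then `K` is linearly disjoint from the constants `L^{δ'}` over `K^δ` inside `L`:
every family of elements of `L^{δ'}` that is linearly independent over `K^δ` remains
linearly independent over `K`. -/
theorem BOperator.constants_linearly_disjoint
    (k B : Type*) [Field k] [CommRing B] [Algebra k B] (π : B →ₐ[k] k)
    (K L : Type*) [Field K] [Field L] [Algebra k K] [Algebra k L]
    [Algebra K L] [IsScalarTower k K L]
    (δ : K →ₐ[k] K ⊗[k] B) (hδ0 : (BOp.counit k K B π).comp δ = AlgHom.id k K)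
    (δ' : L →ₐ[k] L ⊗[k] B) (hδ'0 : (BOp.counit k L B π).comp δ' = AlgHom.id k L)
    (hext : δ'.comp (IsScalarTower.toAlgHom k K L) =
      (Algebra.TensorProduct.map (IsScalarTower.toAlgHom k K L) (AlgHom.id k B)).comp δ)
    (ι : Type*) (v : ι → L)
    (hv : ∀ i, δ' (v i) = (v i) ⊗ₜ[k] (1 : B))
    (hindep : ∀ (s : Finset ι) (g : ι → K), (∀ i, δ (g i) = (g i) ⊗ₜ[k] (1 : B)) →
      ∑ i ∈ s, g i • v i = 0 → ∀ i ∈ s, g i = 0) :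
    LinearIndependent K v :=
  BOperator.constants_linearly_disjoint_general k B K L δ δ' hext ι v hv hindep
end

section
/- Let k be a field and B a finite-dimensional commutative local k-algebra with a k-algebra homomorphism π : B → k, and suppose B ≠ k, i.e. ker π ≠ 0 (equivalently dim_k B ≥ 2). Then there exists a surjective k-algebra homomorphism B → k[X]/(X²) (equivalently, onto the dual numbers DualNumber k). -/
/-!
The maximal ideal `m = ker π` is nonzero and nilpotent, so `m² ≠ m`. A linear functional `T` on
`B` that kills `1` and `m²` but not some `x ∈ m` satisfies the Leibniz rule
`T (a * b) = π a * T b + π b * T a`, because `a * b` and `(a - π a) * (b - π b)` differ by an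
element of `k ⊕ k a ⊕ k b`. Hence `a ↦ π a + T a ε` is a `k`-algebra map onto `k[ε]`, hitting `ε`
at `x`.
-/

open TrivSqZeroExt

theorem Ideal.eq_bot_of_isNilpotent_of_le_sq {R : Type*} [CommSemiring R] {I : Ideal R}
    (hI : IsNilpotent I) (h : I ≤ I ^ 2) : I = ⊥ :=
  IsIdempotentElem.eq_zero_of_isNilpotent
    (le_antisymm Ideal.mul_le_right (pow_two I ▸ h)) hI

namespace AlgHom

section CommRing

variable {R A : Type*} [CommRing R] [CommRing A] [Algebra R A] (π : A →ₐ[R] R)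

theorem mem_ker_sq_of_mem_sup_span_one {x : A} (hx : x ∈ RingHom.ker π)
    (hx' : x ∈ (RingHom.ker π ^ 2).restrictScalars R ⊔ R ∙ (1 : A)) :
    x ∈ RingHom.ker π ^ 2 := by
  obtain ⟨y, hy, z, hz, rfl⟩ := Submodule.mem_sup.mp hx'
  obtain ⟨c, rfl⟩ := Submodule.mem_span_singleton.mp hz
  have hπy : π y = 0 := Ideal.pow_le_self two_ne_zero hy
  have hc : c = 0 := by simpa [hπy] using hx
  simpa [hc] using hy

theorem leibniz_of_map_ker_sq_eq_zero (T : A →ₗ[R] R) (hT1 : T 1 = 0)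
    (hT : ∀ y ∈ RingHom.ker π ^ 2, T y = 0) (a b : A) :
    T (a * b) = π a * T b + π b * T a := by
  have hsub : ∀ c : A, c - algebraMap R A (π c) ∈ RingHom.ker π := fun c ↦ by simp
  have hprod := hT _ (pow_two (RingHom.ker π) ▸ Ideal.mul_mem_mul (hsub a) (hsub b))
  have hab : a * b = π a • b + π b • a - (π a * π b) • (1 : A)
      + (a - algebraMap R A (π a)) * (b - algebraMap R A (π b)) := by
    simp only [Algebra.smul_def, map_mul, mul_one]
    ring
  rw [hab, map_add, map_sub, map_add, map_smul, map_smul, map_smul, hT1, hprod]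
  simp only [smul_eq_mul]
  ring

def toDualNumber (T : A →ₗ[R] R) (hT1 : T 1 = 0)
    (hT : ∀ a b, T (a * b) = π a * T b + π b * T a) : A →ₐ[R] DualNumber R :=
  ofLinearMap ((Algebra.linearMap R (DualNumber R)).comp π.toLinearMap + (inrHom R R).comp T)
    (by ext <;> simp [algebraMap_eq_inl', hT1]) fun a b ↦ by
      ext
      · simp [algebraMap_eq_inl']
      · simp [algebraMap_eq_inl', hT, mul_comm]

variable {π} {T : A →ₗ[R] R} {hT1 : T 1 = 0} {hT : ∀ a b, T (a * b) = π a * T b + π b * T a}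

@[simp]
theorem fst_toDualNumber (a : A) : TrivSqZeroExt.fst (π.toDualNumber T hT1 hT a) = π a := by
  simp [toDualNumber, algebraMap_eq_inl']

@[simp]
theorem snd_toDualNumber (a : A) : TrivSqZeroExt.snd (π.toDualNumber T hT1 hT a) = T a := by
  simp [toDualNumber, algebraMap_eq_inl']

theorem toDualNumber_surjective {x : A} (hπx : π x = 0) (hTx : T x = 1) :
    Function.Surjective (π.toDualNumber T hT1 hT) := fun z ↦
  ⟨algebraMap R A z.fst + z.snd • x, by ext <;> simp [algebraMap_eq_inl', hπx, hTx]⟩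

end CommRing

theorem exists_linearMap_eq_one_of_notMem_ker_sq {k A : Type*} [Field k] [CommRing A]
    [Algebra k A] (π : A →ₐ[k] k) {x : A} (hx : x ∈ RingHom.ker π)
    (hx' : x ∉ RingHom.ker π ^ 2) :
    ∃ T : A →ₗ[k] k, T 1 = 0 ∧ (∀ y ∈ RingHom.ker π ^ 2, T y = 0) ∧ T x = 1 := by
  set W := (RingHom.ker π ^ 2).restrictScalars k ⊔ k ∙ (1 : A)
  obtain ⟨f, hfx, hfW⟩ := Submodule.exists_dual_map_eq_bot_of_notMem
    (fun h ↦ hx' (π.mem_ker_sq_of_mem_sup_span_one hx h)) (p := W) inferInstance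
  have hf : ∀ w ∈ W, f w = 0 := fun w hw ↦ LinearMap.le_ker_iff_map.mpr hfW hw
  refine ⟨(f x)⁻¹ • f, ?_, fun y hy ↦ ?_, inv_mul_cancel₀ hfx⟩
  · simp [hf 1 (Submodule.mem_sup_right (Submodule.mem_span_singleton_self 1))]
  · simp [hf y (Submodule.mem_sup_left hy)]

end AlgHom

/-- Let `k` be a field and `B` a finite-dimensional commutative local `k`-algebra with a
`k`-algebra homomorphism `π : B → k`, and suppose `B ≠ k`, i.e. `ker π ≠ 0`. Then there is a
surjective `k`-algebra homomorphism from `B` onto the dual numbers `k[X]/(X²)`. -/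
theorem exists_surjective_algHom_to_dualNumber
    (k B : Type*) [Field k] [CommRing B] [Algebra k B]
    [FiniteDimensional k B] [IsLocalRing B] (π : B →ₐ[k] k)
    (hne : RingHom.ker π ≠ ⊥) :
    ∃ f : B →ₐ[k] DualNumber k, Function.Surjective f := by
  have : IsArtinianRing B := .of_finite k B
  have hπ : Function.Surjective π := fun c ↦ ⟨algebraMap k B c, by simp⟩
  have hnil : IsNilpotent (RingHom.ker π) := by
    rw [AlgHom.ker_coe, IsLocalRing.ker_eq_maximalIdeal (π : B →+* k) hπ]
    exact (isArtinianRing_iff_isNilpotent_maximalIdeal B).mp this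
  obtain ⟨x, hx, hx'⟩ : ∃ x ∈ RingHom.ker π, x ∉ RingHom.ker π ^ 2 := by
    by_contra! h
    exact hne (Ideal.eq_bot_of_isNilpotent_of_le_sq hnil h)
  obtain ⟨T, hT1, hT, hTx⟩ := π.exists_linearMap_eq_one_of_notMem_ker_sq hx hx'
  have hleib := π.leibniz_of_map_ker_sq_eq_zero T hT1 hT
  exact ⟨π.toDualNumber T hT1 hleib, AlgHom.toDualNumber_surjective hx hTx⟩
end
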